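/- If a compact Hausdorff topological space X admits an orbit expansive homeomorphism, then X is metrizable. -/

import Mathlib

/-! The partition of unity `φ` subordinate to an o-expansive cover `U` turns the itinerary of a
point into a continuous code `x ↦ (n, i) ↦ φ i (fⁿ x)` with values in the metrizable space
`ℤ → Fin l → ℝ`. Equal codes force the two orbits to visit a common `U i` at every time, so
o-expansivity makes the code injective, and a continuous injection of a compact space into a
Hausdorff space is an embedding. -/

open Set

/-- The `n`-th iterate (`n : ℤ`) of a homeomorphism `f`, as a function. -/
def Homeomorph.zpow {X : Type*} [TopologicalSpace X] (f : X ≃ₜ X) (n : ℤ) : X → X :=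
  ⇑(f.toEquiv ^ n)

/-- `U = {U 0, …, U (l-1)}` is an o-expansive covering for the homeomorphism `f`:
it is a finite open cover such that any two points whose whole orbits stay
`U`-close must coincide. -/
def IsOExpansiveCover {X : Type*} [TopologicalSpace X] {l : ℕ} (f : X ≃ₜ X)
    (U : Fin l → Set X) : Prop :=
  (∀ i, IsOpen (U i)) ∧ (⋃ i, U i) = Set.univ ∧
    ∀ x y : X, (∀ n : ℤ, ∃ i, f.zpow n x ∈ U i ∧ f.zpow n y ∈ U i) → x = y

/-- A homeomorphism is orbit expansive if it admits an o-expansive covering. -/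
def OrbitExpansive {X : Type*} [TopologicalSpace X] (f : X ≃ₜ X) : Prop :=
  ∃ (l : ℕ) (U : Fin l → Set X), IsOExpansiveCover f U

/-- `U` is an r-expansivity covering for `f`: a finite open cover such that for every
open cover `V` and every sequence `k : ℤ → Fin n` there is `N` with
`⋂_{|j| ≤ N} f^j(U (k j))` contained in a member of `V`. -/
def IsRExpansiveCover {X : Type*} [TopologicalSpace X] {n : ℕ} (f : X ≃ₜ X)
    (U : Fin n → Set X) : Prop :=
  (∀ i, IsOpen (U i)) ∧ (⋃ i, U i) = Set.univ ∧
    ∀ V : Set (Set X), (∀ v ∈ V, IsOpen v) → ⋃₀ V = Set.univ →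
      ∀ k : ℤ → Fin n, ∃ N : ℕ, ∃ v ∈ V,
        (⋂ j ∈ Set.Icc (-(N : ℤ)) (N : ℤ), f.zpow j '' U (k j)) ⊆ v

/-- A homeomorphism is refinement expansive if it admits an r-expansivity covering. -/
def RefinementExpansive {X : Type*} [TopologicalSpace X] (f : X ≃ₜ X) : Prop :=
  ∃ (n : ℕ) (U : Fin n → Set X), IsRExpansiveCover f U

/-- `U` is a uniform r-expansivity covering for `f`: `N` can be chosen uniformly in the
sequence `k`. -/
def IsUniformRExpansiveCover {X : Type*} [TopologicalSpace X] {n : ℕ} (f : X ≃ₜ X)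
    (U : Fin n → Set X) : Prop :=
  (∀ i, IsOpen (U i)) ∧ (⋃ i, U i) = Set.univ ∧
    ∀ V : Set (Set X), (∀ v ∈ V, IsOpen v) → ⋃₀ V = Set.univ →
      ∃ N : ℕ, ∀ k : ℤ → Fin n, ∃ v ∈ V,
        (⋂ j ∈ Set.Icc (-(N : ℤ)) (N : ℤ), f.zpow j '' U (k j)) ⊆ v

/-- A homeomorphism is uniformly refinement expansive if it admits a uniform
r-expansivity covering. -/
def UniformlyRefinementExpansive {X : Type*} [TopologicalSpace X] (f : X ≃ₜ X) : Prop :=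
  ∃ (n : ℕ) (U : Fin n → Set X), IsUniformRExpansiveCover f U

namespace Homeomorph

variable {X : Type*} [TopologicalSpace X]

theorem zpow_eq_coe_zpow (f : X ≃ₜ X) (n : ℤ) : f.zpow n = ⇑(f ^ n) :=
  let toPerm : (X ≃ₜ X) →* Equiv.Perm X :=
    { toFun := Homeomorph.toEquiv, map_one' := rfl, map_mul' := fun _ _ => rfl }
  congrArg DFunLike.coe (map_zpow toPerm f n).symm

theorem continuous_zpow (f : X ≃ₜ X) (n : ℤ) : Continuous (f.zpow n) := by
  rw [zpow_eq_coe_zpow]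
  exact (f ^ n).continuous

end Homeomorph

theorem PartitionOfUnity.IsSubordinate.exists_mem_of_eq {X ι : Type*} [TopologicalSpace X]
    {s : Set X} {φ : PartitionOfUnity ι X s} {U : ι → Set X} (hφ : φ.IsSubordinate U)
    {x y : X} (hx : x ∈ s) (hxy : ∀ i, φ i x = φ i y) : ∃ i, x ∈ U i ∧ y ∈ U i := by
  obtain ⟨i, hi⟩ := φ.exists_pos hx
  have mem_of_pos {z : X} (hz : 0 < φ i z) : z ∈ U i :=
    hφ i (subset_tsupport _ hz.ne')
  exact ⟨i, mem_of_pos hi, mem_of_pos (hxy i ▸ hi)⟩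

theorem IsOExpansiveCover.injective_itinerary {X : Type*} [TopologicalSpace X] {l : ℕ}
    {f : X ≃ₜ X} {U : Fin l → Set X} (hU : IsOExpansiveCover f U)
    {φ : PartitionOfUnity (Fin l) X univ} (hφ : φ.IsSubordinate U) :
    Function.Injective fun x (n : ℤ) i => φ i (f.zpow n x) := fun x y hxy =>
  hU.2.2 x y fun n => hφ.exists_mem_of_eq (mem_univ _) fun i => congrFun (congrFun hxy n) i

/-- Theorem 2.7: a compact Hausdorff space admitting an orbit expansive homeomorphism
is metrizable. -/
theorem metrizableSpace_of_orbitExpansive {X : Type*} [TopologicalSpace X]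
    [CompactSpace X] [T2Space X] (f : X ≃ₜ X) (hf : OrbitExpansive f) :
    TopologicalSpace.MetrizableSpace X := by
  obtain ⟨l, U, hU⟩ := hf
  obtain ⟨φ, hφ⟩ := PartitionOfUnity.exists_isSubordinate isClosed_univ U hU.1 hU.2.1.ge
  have hcont : Continuous fun x (n : ℤ) i => φ i (f.zpow n x) :=
    continuous_pi fun n => continuous_pi fun i => (φ i).continuous.comp (f.continuous_zpow n)
  exact (hcont.isClosedEmbedding (hU.injective_itinerary hφ)).isEmbedding.metrizableSpace
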